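/- For the linear front f(x)=3−x on [1,2] and μ=10, the optimal 10-point approximation distribution (without requiring extreme points) is {33/31, 36/31, 39/31, 42/31, 45/31, 48/31, 51/31, 54/31, 57/31, 60/31}, achieving the optimal approximation ratio 31/30. -/
import Mathlib

open Set Finset Real

def IsApprox (f : ℝ → ℝ) (a b : ℝ) (X : Set ℝ) (δ : ℝ) : Prop :=
  1 ≤ δ ∧ ∀ x ∈ Set.Icc a b, ∃ y ∈ X, x ≤ δ * y ∧ f x ≤ δ * f y

noncomputable def approxRatio (f : ℝ → ℝ) (a b : ℝ) (X : Set ℝ) : ℝ :=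
  sInf {δ : ℝ | IsApprox f a b X δ}

lemma key_lower (Y : Set ℝ) (hY : Y ⊆ Set.Icc 1 2) (hF : Y.Finite) (hc : Y.ncard = 10)
    (δ : ℝ) (hδ : IsApprox (fun x => 3 - x) 1 2 Y δ) : 31 / 30 ≤ δ := by
  obtain ⟨h1, h⟩ := hδ
  have hcov : Set.Icc (1:ℝ) 2 ⊆ ⋃ y ∈ hF.toFinset, Set.Icc (3 - δ * (3 - y)) (δ * y) := by
    intro x hx
    obtain ⟨y, hy, ha, hb⟩ := h x hx
    have hb' : 3 - x ≤ δ * (3 - y) := hb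
    simp only [Set.mem_iUnion]
    exact ⟨y, hF.mem_toFinset.mpr hy, ⟨by linarith, ha⟩⟩
  have hvol := MeasureTheory.measure_mono (μ := MeasureTheory.volume) hcov
  have hle := MeasureTheory.measure_biUnion_finset_le (μ := MeasureTheory.volume) hF.toFinset
      (fun y => Set.Icc (3 - δ * (3 - y)) (δ * y))
  have hcard : hF.toFinset.card = 10 := by
    rw [← Set.ncard_eq_toFinset_card Y hF]; exact hc
  have hsum : ∑ y ∈ hF.toFinset, MeasureTheory.volume (Set.Icc (3 - δ * (3 - y)) (δ * y))
      = 10 * ENNReal.ofReal (3 * δ - 3) := by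
    have heq : ∀ y ∈ hF.toFinset,
        MeasureTheory.volume (Set.Icc (3 - δ * (3 - y)) (δ * y)) = ENNReal.ofReal (3 * δ - 3) := by
      intro y _
      rw [Real.volume_Icc]
      congr 1
      ring
    rw [Finset.sum_congr rfl heq, Finset.sum_const, hcard]
    simp [nsmul_eq_mul]
  have hone : MeasureTheory.volume (Set.Icc (1:ℝ) 2) = ENNReal.ofReal 1 := by
    rw [Real.volume_Icc]; norm_num
  have hfinal : ENNReal.ofReal 1 ≤ ENNReal.ofReal (30 * δ - 30) := by
    have h30 : ENNReal.ofReal (30 * δ - 30) = 10 * ENNReal.ofReal (3 * δ - 3) := by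
      rw [show (30 * δ - 30 : ℝ) = 10 * (3 * δ - 3) by ring,
        ENNReal.ofReal_mul (by norm_num)]
      norm_num
    rw [h30, ← hsum, ← hone]
    exact hvol.trans hle
  have hr : (1:ℝ) ≤ 30 * δ - 30 := by
    rcases le_or_gt (30 * δ - 30) 0 with h0 | h0
    · simp [ENNReal.ofReal_eq_zero.mpr h0] at hfinal
    · exact (ENNReal.ofReal_le_ofReal_iff h0.le).mp hfinal
  linarith

theorem stmt15 :
    approxRatio (fun x => 3 - x) 1 2
      ({33 / 31, 36 / 31, 39 / 31, 42 / 31, 45 / 31, 48 / 31, 51 / 31, 54 / 31,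
        57 / 31, 60 / 31} : Set ℝ) = 31 / 30 ∧
    ∀ Y : Set ℝ, Y ⊆ Set.Icc 1 2 → Y.Finite → Y.ncard = 10 →
      (31 : ℝ) / 30 ≤ approxRatio (fun x => 3 - x) 1 2 Y := by
  have hmem : IsApprox (fun x => 3 - x) 1 2
      ({33 / 31, 36 / 31, 39 / 31, 42 / 31, 45 / 31, 48 / 31, 51 / 31, 54 / 31,
        57 / 31, 60 / 31} : Set ℝ) (31 / 30) := by
    refine ⟨by norm_num, ?_⟩
    intro x hx
    obtain ⟨hx1, hx2⟩ := hx
    rcases le_or_gt x (11/10) with h0 | h0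
    · refine ⟨33/31, ?_, ?_, ?_⟩
      · left; rfl
      · linarith
      · show 3 - x ≤ _; linarith
    rcases le_or_gt x (12/10) with h1 | h1
    · refine ⟨36/31, ?_, ?_, ?_⟩
      · right; left; rfl
      · linarith
      · show 3 - x ≤ _; linarith
    rcases le_or_gt x (13/10) with h2 | h2
    · refine ⟨39/31, ?_, ?_, ?_⟩
      · right; right; left; rfl
      · linarith
      · show 3 - x ≤ _; linarith
    rcases le_or_gt x (14/10) with h3 | h3
    · refine ⟨42/31, ?_, ?_, ?_⟩
      · right; right; right; left; rfl
      · linarith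
      · show 3 - x ≤ _; linarith
    rcases le_or_gt x (15/10) with h4 | h4
    · refine ⟨45/31, ?_, ?_, ?_⟩
      · right; right; right; right; left; rfl
      · linarith
      · show 3 - x ≤ _; linarith
    rcases le_or_gt x (16/10) with h5 | h5
    · refine ⟨48/31, ?_, ?_, ?_⟩
      · right; right; right; right; right; left; rfl
      · linarith
      · show 3 - x ≤ _; linarith
    rcases le_or_gt x (17/10) with h6 | h6
    · refine ⟨51/31, ?_, ?_, ?_⟩
      · right; right; right; right; right; right; left; rfl
      · linarith
      · show 3 - x ≤ _; linarith
    rcases le_or_gt x (18/10) with h7 | h7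
    · refine ⟨54/31, ?_, ?_, ?_⟩
      · right; right; right; right; right; right; right; left; rfl
      · linarith
      · show 3 - x ≤ _; linarith
    rcases le_or_gt x (19/10) with h8 | h8
    · refine ⟨57/31, ?_, ?_, ?_⟩
      · right; right; right; right; right; right; right; right; left; rfl
      · linarith
      · show 3 - x ≤ _; linarith
    · refine ⟨60/31, ?_, ?_, ?_⟩
      · right; right; right; right; right; right; right; right; right; rfl
      · linarith
      · show 3 - x ≤ _; linarith
  constructor
  · apply le_antisymm
    · exact csInf_le ⟨0, fun δ hδ => le_trans (by norm_num) hδ.1⟩ hmem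
    · apply le_csInf ⟨31/30, hmem⟩
      rintro δ ⟨hδ1, hδ2⟩
      obtain ⟨y, hy, ha, -⟩ := hδ2 2 (by norm_num)
      have hy60 : y ≤ 60/31 := by
        rcases hy with rfl|rfl|rfl|rfl|rfl|rfl|rfl|rfl|rfl|rfl <;> norm_num
      nlinarith
  · intro Y hYsub hYfin hYcard
    apply le_csInf
    · obtain ⟨y0, hy0⟩ := Set.nonempty_of_ncard_ne_zero (s := Y) (by rw [hYcard]; norm_num)
      obtain ⟨hy01, hy02⟩ := hYsub hy0
      refine ⟨2, ⟨by norm_num, fun x hx => ⟨y0, hy0, ?_, ?_⟩⟩⟩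
      · obtain ⟨ha1, ha2⟩ := hx; linarith
      · obtain ⟨ha1, ha2⟩ := hx; show 3 - x ≤ 2 * (3 - y0); linarith
    · exact fun δ hδ => key_lower Y hYsub hYfin hYcard δ hδ
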